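/- For every continuous compactly supported u : ℝ → ℂ, the function F : {μ ∈ ℂ : Re μ < 1} → ℂ defined by F(μ) = ∫_ℝ V_μ(x)·conj(u(x)) dx is well defined (the integral converging absolutely) and holomorphic on {μ ∈ ℂ : Re μ < 1}, where V_μ(x) = e^(iπ(1+μ)/4)·π^(−1/2)·(1−x²)^(−(1+μ)/2) for |x| < 1, V_μ(x) = e^(−iπ(1+μ)/4)·π^(−1/2)·(x²−1)^(−(1+μ)/2) for |x| > 1, and V_μ(±1) = 0 (principal complex powers of positive reals). -/

import Mathlib

/-!
Pointwise in `x`, `μ ↦ V_μ(x)` is entire (an exponential in `μ`, or zero). On a disc around `μ₀`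
one has `|V_μ(x)| ≤ C (|1 - x²|^(-s₀) + |1 - x²|^(-s₁))` with `s₀, s₁ < 1`, and these weights are
locally integrable because `|1 - x²|^(-s) ≤ |x - 1|^(-s) + |x + 1|^(-s)`, so they are integrable
against `|u|`. Cauchy's estimate turns this locally uniform bound on the integrand into a bound on
its `μ`-derivative, and differentiation under the integral sign applies.
-/

open MeasureTheory Complex

/-- The family of boundary-value functions `V_μ` (compact-picture realization of the
holomorphic `H`-spherical distribution vector with `μ = conj(λ)`); principal complex
powers of positive reals. -/
noncomputable def Vmu (μ : ℂ) (x : ℝ) : ℂ :=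
  if |x| < 1 then
    Complex.exp (Complex.I * Real.pi * (1 + μ) / 4) *
      (Real.pi : ℂ) ^ (-(1 / 2 : ℂ)) * ((1 - x ^ 2 : ℝ) : ℂ) ^ (-(1 + μ) / 2)
  else if 1 < |x| then
    Complex.exp (-(Complex.I * Real.pi * (1 + μ) / 4)) *
      (Real.pi : ℂ) ^ (-(1 / 2 : ℂ)) * ((x ^ 2 - 1 : ℝ) : ℂ) ^ (-(1 + μ) / 2)
  else 0

open Metric Filter Topology

section ParametricIntegral

variable {α E : Type*} [MeasurableSpace α] {ν : Measure α}
  [NormedAddCommGroup E] [NormedSpace ℂ E]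

theorem aestronglyMeasurable_deriv_of_ae_differentiableAt {F : ℂ → α → E} {z₀ : ℂ}
    (hF_meas : ∀ z, AEStronglyMeasurable (F z) ν)
    (h_diff : ∀ᵐ a ∂ν, DifferentiableAt ℂ (F · a) z₀) :
    AEStronglyMeasurable (fun a => deriv (F · a) z₀) ν := by
  set z : ℕ → ℂ := fun n => z₀ + ((1 / ((n : ℝ) + 1) : ℝ) : ℂ)
  have hz : Tendsto z atTop (𝓝[≠] z₀) := by
    refine tendsto_nhdsWithin_iff.mpr ⟨?_, Eventually.of_forall fun n => ?_⟩
    · simpa [z] using ((continuous_ofReal.tendsto 0).comp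
        tendsto_one_div_add_atTop_nhds_zero_nat).const_add z₀
    · simp only [Set.mem_compl_iff, Set.mem_singleton_iff, add_eq_left, z, ofReal_eq_zero]
      positivity
  refine aestronglyMeasurable_of_tendsto_ae atTop
    (f := fun n a => slope (F · a) z₀ (z n))
    (fun n => ((hF_meas (z n)).sub (hF_meas z₀)).const_smul _) ?_
  filter_upwards [h_diff] with a ha
  exact (hasDerivAt_iff_tendsto_slope.mp ha.hasDerivAt).comp hz

theorem differentiableAt_integral_of_dominated [CompleteSpace E] {F : ℂ → α → E} {z₀ : ℂ}
    {r : ℝ} (hr : 0 < r) {bound : α → ℝ} (hF_meas : ∀ z, AEStronglyMeasurable (F z) ν)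
    (h_diff : ∀ᵐ a ∂ν, DifferentiableOn ℂ (F · a) (ball z₀ r))
    (h_bound : ∀ᵐ a ∂ν, ∀ z ∈ ball z₀ r, ‖F z a‖ ≤ bound a)
    (bound_integrable : Integrable bound ν) :
    DifferentiableAt ℂ (fun z => ∫ a, F z a ∂ν) z₀ := by
  have hr2 : 0 < r / 2 := half_pos hr
  have h_int : Integrable (F z₀) ν :=
    bound_integrable.mono' (hF_meas z₀) (h_bound.mono fun a ha => ha z₀ (mem_ball_self hr))
  have h_hasDeriv : ∀ᵐ a ∂ν, ∀ z ∈ ball z₀ (r / 2), HasDerivAt (F · a) (deriv (F · a) z) z := by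
    filter_upwards [h_diff] with a ha z hz
    exact (ha.differentiableAt (isOpen_ball.mem_nhds
      (ball_subset_ball (half_le_self hr.le) hz))).hasDerivAt
  -- Cauchy's estimate on a circle of radius `r / 2` around each point of `ball z₀ (r / 2)`
  have h_deriv_bound : ∀ᵐ a ∂ν, ∀ z ∈ ball z₀ (r / 2), ‖deriv (F · a) z‖ ≤ bound a / (r / 2) := by
    filter_upwards [h_diff, h_bound] with a hda hba z hz
    have hsub : closedBall z (r / 2) ⊆ ball z₀ r :=
      closedBall_subset_ball' (by linarith [mem_ball.mp hz])
    exact norm_deriv_le_of_forall_mem_sphere_norm_le hr2 (hda.diffContOnCl_ball hsub)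
      fun w hw => hba w (hsub (sphere_subset_closedBall hw))
  have h_deriv_meas := aestronglyMeasurable_deriv_of_ae_differentiableAt hF_meas
    (h_hasDeriv.mono fun a ha => (ha z₀ (mem_ball_self hr2)).differentiableAt)
  exact (hasDerivAt_integral_of_dominated_loc_of_deriv_le (ball_mem_nhds z₀ hr2)
    (Eventually.of_forall hF_meas) h_int h_deriv_meas h_deriv_bound
    (bound_integrable.div_const _) h_hasDeriv).2.differentiableAt

end ParametricIntegral

lemma one_sub_sq_pos_of_abs_lt_one {x : ℝ} (hx : |x| < 1) : 0 < 1 - x ^ 2 := by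
  nlinarith [sq_abs x, abs_nonneg x]

lemma sq_sub_one_pos_of_one_lt_abs {x : ℝ} (hx : 1 < |x|) : 0 < x ^ 2 - 1 := by
  nlinarith [sq_abs x]

lemma measurable_Vmu (μ : ℂ) : Measurable (Vmu μ) := by
  unfold Vmu
  exact Measurable.ite (measurableSet_lt measurable_abs measurable_const) (by fun_prop)
    (Measurable.ite (measurableSet_lt measurable_const measurable_abs) (by fun_prop)
      measurable_const)

lemma differentiable_Vmu (x : ℝ) : Differentiable ℂ (fun μ => Vmu μ x) := by
  unfold Vmu
  split_ifs with h₁ h₂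
  · have := (one_sub_sq_pos_of_abs_lt_one h₁).ne'
    fun_prop (disch := exact Or.inl (by exact_mod_cast this))
  · have := (sq_sub_one_pos_of_one_lt_abs h₂).ne'
    fun_prop (disch := exact Or.inl (by exact_mod_cast this))
  · exact differentiable_const 0

lemma norm_mul_pi_cpow_mul_cpow_le {c : ℂ} {ρ : ℝ} (hρ : 0 < ρ) (μ : ℂ) :
    ‖c * (Real.pi : ℂ) ^ (-(1 / 2 : ℂ)) * (ρ : ℂ) ^ (-(1 + μ) / 2)‖ ≤
      ‖c‖ * ρ ^ (-((1 + μ.re) / 2)) := by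
  have hπ : ‖(Real.pi : ℂ) ^ (-(1 / 2 : ℂ))‖ ≤ 1 := by
    rw [norm_cpow_eq_rpow_re_of_pos Real.pi_pos]
    exact Real.rpow_le_one_of_one_le_of_nonpos (by linarith [Real.pi_gt_three]) (by norm_num)
  rw [norm_mul, norm_mul, norm_cpow_eq_rpow_re_of_pos hρ]
  have hre : (-(1 + μ) / 2).re = -((1 + μ.re) / 2) := by
    simp only [neg_add_rev, div_ofNat_re, add_re, neg_re, one_re]; ring
  calc ‖c‖ * ‖(Real.pi : ℂ) ^ (-(1 / 2 : ℂ))‖ * ρ ^ (-(1 + μ) / 2).re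
      ≤ ‖c‖ * 1 * ρ ^ (-(1 + μ) / 2).re := by gcongr
    _ = ‖c‖ * ρ ^ (-((1 + μ.re) / 2)) := by rw [mul_one, hre]

lemma norm_Vmu_le (μ : ℂ) (x : ℝ) :
    ‖Vmu μ x‖ ≤ Real.exp (Real.pi * |μ.im| / 4) * |1 - x ^ 2| ^ (-((1 + μ.re) / 2)) := by
  have hre : (Complex.I * Real.pi * (1 + μ) / 4).re = -(Real.pi * μ.im / 4) := by
    simp only [div_ofNat_re, mul_re, I_re, ofReal_re, zero_mul, I_im, ofReal_im, mul_zero,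
      sub_self, add_re, one_re, mul_im, one_mul, zero_add, add_im, one_im, zero_sub]
    ring
  have hπ := Real.pi_pos
  unfold Vmu
  split_ifs with h₁ h₂
  · have hρ := one_sub_sq_pos_of_abs_lt_one h₁
    refine (norm_mul_pi_cpow_mul_cpow_le hρ μ).trans ?_
    rw [abs_of_pos hρ, Complex.norm_exp, hre]
    gcongr
    nlinarith [neg_abs_le μ.im]
  · have hρ := sq_sub_one_pos_of_one_lt_abs h₂
    refine (norm_mul_pi_cpow_mul_cpow_le hρ μ).trans ?_
    rw [abs_sub_comm, abs_of_pos hρ, Complex.norm_exp, neg_re, hre, neg_neg]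
    gcongr
    nlinarith [le_abs_self μ.im]
  · rw [norm_zero]
    positivity

lemma locallyIntegrable_abs_sub_rpow (c : ℝ) {r : ℝ} (hr : -1 < r) :
    LocallyIntegrable (fun x : ℝ => |x - c| ^ r) := by
  have h₀ : LocallyIntegrable (fun x : ℝ => |x| ^ r) :=
    locallyIntegrable_of_norm_le_rpow (C := 1) (α := -r) (by simp) (by simp; linarith)
      (ae_of_all _ fun x => by simp [abs_of_nonneg (Real.rpow_nonneg (abs_nonneg x) r)])
      (by fun_prop : Measurable fun x : ℝ => |x| ^ r).aestronglyMeasurable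
  rw [← (measurePreserving_sub_right volume c).map_eq] at h₀
  exact (locallyIntegrable_map_homeomorph (Homeomorph.subRight c)).1 h₀

lemma abs_one_sub_sq_rpow_neg_le (x : ℝ) {t : ℝ} (ht : 0 ≤ t) :
    |1 - x ^ 2| ^ (-t) ≤ |x - 1| ^ (-t) + |x + 1| ^ (-t) := by
  have hfac : |1 - x ^ 2| = |x - 1| * |x + 1| := by
    rw [← abs_mul, abs_sub_comm]; ring_nf
  rw [hfac, Real.mul_rpow (abs_nonneg _) (abs_nonneg _)]
  have h₁ := Real.rpow_nonneg (abs_nonneg (x - 1)) (-t)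
  have h₂ := Real.rpow_nonneg (abs_nonneg (x + 1)) (-t)
  -- one of the two factors is at least `1`, so its power is at most `1`
  rcases le_total 0 x with hx | hx
  · have : |x + 1| ^ (-t) ≤ 1 := Real.rpow_le_one_of_one_le_of_nonpos
      (by rw [abs_of_nonneg (by linarith)]; linarith) (by linarith)
    nlinarith
  · have : |x - 1| ^ (-t) ≤ 1 := Real.rpow_le_one_of_one_le_of_nonpos
      (by rw [abs_of_nonpos (by linarith)]; linarith) (by linarith)
    nlinarith

lemma locallyIntegrable_abs_one_sub_sq_rpow_neg {t : ℝ} (ht : t < 1) :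
    LocallyIntegrable (fun x : ℝ => |1 - x ^ 2| ^ (-t)) := by
  rcases le_or_gt t 0 with ht₀ | ht₀
  · exact (Continuous.rpow_const (by fun_prop) fun _ => Or.inr (by linarith)).locallyIntegrable
  · refine ((locallyIntegrable_abs_sub_rpow 1 (r := -t) (by linarith)).add
      (by simpa using locallyIntegrable_abs_sub_rpow (-1) (r := -t) (by linarith))).mono
      (by fun_prop : Measurable fun x : ℝ => |1 - x ^ 2| ^ (-t)).aestronglyMeasurable
      (ae_of_all _ fun x => ?_)
    rw [Real.norm_of_nonneg (by positivity),
      Real.norm_of_nonneg (by simp only [Pi.add_apply]; positivity)]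
    exact abs_one_sub_sq_rpow_neg_le x ht₀.le

lemma integrable_abs_one_sub_sq_rpow_neg_mul {u : ℝ → ℂ} (hu : Continuous u)
    (hsupp : HasCompactSupport u) {t : ℝ} (ht : t < 1) :
    Integrable (fun x : ℝ => |1 - x ^ 2| ^ (-t) * ‖u x‖) :=
  (locallyIntegrable_abs_one_sub_sq_rpow_neg ht).integrable_smul_right_of_hasCompactSupport
    hu.norm hsupp.norm

lemma rpow_le_rpow_add_rpow {ρ a b c : ℝ} (hρ : 0 < ρ) (hab : a ≤ b) (hbc : b ≤ c) :
    ρ ^ b ≤ ρ ^ a + ρ ^ c := by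
  rcases le_total ρ 1 with h | h
  · linarith [Real.rpow_le_rpow_of_exponent_ge hρ h hab, Real.rpow_nonneg hρ.le c]
  · linarith [Real.rpow_le_rpow_of_exponent_le h hbc, Real.rpow_nonneg hρ.le a]

lemma norm_Vmu_le_of_mem_ball {μ₀ μ : ℂ} {r : ℝ} (hμ : μ ∈ ball μ₀ r) (x : ℝ) :
    ‖Vmu μ x‖ ≤ Real.exp (Real.pi * (|μ₀.im| + r) / 4) *
      (|1 - x ^ 2| ^ (-((1 + μ₀.re + r) / 2)) + |1 - x ^ 2| ^ (-((1 + μ₀.re - r) / 2))) := by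
  by_cases hx : |x| = 1
  · have : Vmu μ x = 0 := by simp [Vmu, hx]
    rw [this, norm_zero]
    positivity
  have hρ : 0 < |1 - x ^ 2| := abs_pos.mpr fun h =>
    hx ((pow_eq_one_iff_of_nonneg (abs_nonneg x) two_ne_zero).mp (by rw [sq_abs]; linarith))
  have hdist : ‖μ - μ₀‖ < r := mem_ball_iff_norm.mp hμ
  have hre : |μ.re - μ₀.re| < r := (abs_re_le_norm (μ - μ₀)).trans_lt hdist
  have him : |μ.im - μ₀.im| < r := (abs_im_le_norm (μ - μ₀)).trans_lt hdist
  refine (norm_Vmu_le μ x).trans (mul_le_mul ?_ ?_ (by positivity) (by positivity))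
  · gcongr
    linarith [abs_sub_abs_le_abs_sub μ.im μ₀.im]
  · exact rpow_le_rpow_add_rpow hρ (by linarith [abs_lt.mp hre]) (by linarith [abs_lt.mp hre])

/-- for every continuous compactly supported `u : ℝ → ℂ`, the function
`F(μ) = ∫ V_μ(x) conj(u(x)) dx` is well defined (absolute convergence) and holomorphic
on the half plane `{μ : Re μ < 1}`. -/
theorem statement3 (u : ℝ → ℂ) (hu : Continuous u) (hsupp : HasCompactSupport u) :
    (∀ μ : ℂ, μ.re < 1 → Integrable (fun x : ℝ => Vmu μ x * (starRingEnd ℂ) (u x))) ∧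
    DifferentiableOn ℂ (fun μ : ℂ => ∫ x : ℝ, Vmu μ x * (starRingEnd ℂ) (u x))
      {μ : ℂ | μ.re < 1} := by
  have hmeas (μ : ℂ) : AEStronglyMeasurable (fun x => Vmu μ x * (starRingEnd ℂ) (u x)) :=
    ((measurable_Vmu μ).mul (continuous_conj.comp hu).measurable).aestronglyMeasurable
  have hρu {t : ℝ} (ht : t < 1) := integrable_abs_one_sub_sq_rpow_neg_mul hu hsupp ht
  refine ⟨fun μ hμ => ?_, fun μ₀ hμ₀ => ?_⟩
  · refine ((hρu (t := (1 + μ.re) / 2) (by linarith)).const_mul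
      (Real.exp (Real.pi * |μ.im| / 4))).mono' (hmeas μ) (ae_of_all _ fun x => ?_)
    rw [norm_mul, RCLike.norm_conj, ← mul_assoc]
    gcongr
    exact norm_Vmu_le μ x
  replace hμ₀ : μ₀.re < 1 := hμ₀
  set r := (1 - μ₀.re) / 2
  have hr : 0 < r := by simp only [r]; linarith
  have hr₁ : μ₀.re + r < 1 := by simp only [r]; linarith
  refine (differentiableAt_integral_of_dominated hr hmeas
    (ae_of_all _ fun x => ((differentiable_Vmu x).mul_const _).differentiableOn)
    (ae_of_all _ fun x μ hμ => ?_) (((hρu (t := (1 + μ₀.re + r) / 2) (by linarith)).add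
      (hρu (t := (1 + μ₀.re - r) / 2) (by linarith))).const_mul
        (Real.exp (Real.pi * (|μ₀.im| + r) / 4)))).differentiableWithinAt
  calc ‖Vmu μ x * (starRingEnd ℂ) (u x)‖ = ‖Vmu μ x‖ * ‖u x‖ := by
        rw [norm_mul, RCLike.norm_conj]
    _ ≤ Real.exp (Real.pi * (|μ₀.im| + r) / 4) * (|1 - x ^ 2| ^ (-((1 + μ₀.re + r) / 2)) +
          |1 - x ^ 2| ^ (-((1 + μ₀.re - r) / 2))) * ‖u x‖ := by
      gcongr; exact norm_Vmu_le_of_mem_ball hμ x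
    _ = _ := by simp only [Pi.add_apply]; ring
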